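/- The set of invertible real skew-symmetric 2n-by-2n matrices has exactly two path-components, distinguished by the sign of the Pfaffian: X and Y lie in the same component if and only if sign(Pf(X)) = sign(Pf(Y)). -/

import Mathlib

/-!
Every invertible skew-symmetric `X` is congruent to `Jpos n`, i.e. `X = G * Jpos n * Gᵀ` with `G`
invertible: a permutation moves a nonzero entry into the top-left `2 × 2` block, which is then
split off from its Schur complement. The invertible matrices form two path components, those of
`1` and of a coordinate reflection: by Gaussian elimination they are products of transvections
(joined to `1`) and diagonal matrices (joined to `1` or to a reflection), and two coordinate
reflections are joined by rotating the mirror. Pushing paths forward along `G ↦ G * Jpos n * Gᵀ`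
joins every `X` to `Jpos n` or to `Jneg n`.

Conversely the Pfaffian is continuous and vanishes nowhere on the set, so its sign is constant
along paths. With `D s = diag(s, 1, …, 1)`, the function `s ↦ Pf (D s * Jpos n * (D s)ᵀ)` is a
polynomial with square `det = s ^ 2` and value `1` at `1`, hence equals `s`; at `s = -1` it is
`Pf (Jneg n)`.
-/

open Matrix

/-- The direct sum of `n` copies of `[[0,1],[-1,0]]`, as a 2n×2n real matrix. -/
def Jpos (n : ℕ) : Matrix (Fin (2*n)) (Fin (2*n)) ℝ :=
  Matrix.of fun i j =>
    if i.1 % 2 = 0 ∧ j.1 = i.1 + 1 then 1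
    else if j.1 % 2 = 0 ∧ i.1 = j.1 + 1 then -1 else 0

/-- Same as `Jpos` but with the first 2×2 block negated. -/
def Jneg (n : ℕ) : Matrix (Fin (2*n)) (Fin (2*n)) ℝ :=
  Matrix.of fun i j =>
    if i.1 < 2 ∧ j.1 < 2 then -(Jpos n i j) else Jpos n i j
/-- `Pf` is the Pfaffian on 2n×2n real matrices: a polynomial (with integer
coefficients) in the matrix entries, whose square is the determinant on
skew-symmetric matrices, normalized by `Pf (Jpos n) = 1`. -/
def IsPfaffian (n : ℕ) (Pf : Matrix (Fin (2*n)) (Fin (2*n)) ℝ → ℝ) : Prop :=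
  (∃ p : MvPolynomial (Fin (2*n) × Fin (2*n)) ℤ,
      ∀ X : Matrix (Fin (2*n)) (Fin (2*n)) ℝ,
        Pf X = MvPolynomial.aeval (fun ij => X ij.1 ij.2) p) ∧
  (∀ X : Matrix (Fin (2*n)) (Fin (2*n)) ℝ, Xᵀ = -X → (Pf X)^2 = X.det) ∧
  Pf (Jpos n) = 1

theorem JoinedIn.mul_isUnit {M : Type*} [Monoid M] [TopologicalSpace M] [ContinuousMul M]
    {a b c d : M} (h₁ : JoinedIn {x | IsUnit x} a b) (h₂ : JoinedIn {x | IsUnit x} c d) :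
    JoinedIn {x | IsUnit x} (a * c) (b * d) :=
  (h₁.mul h₂).mono (by rintro _ ⟨x, hx, y, hy, rfl⟩; exact hx.mul hy)

theorem joinedIn_of_continuous_of_forall_mem {X : Type*} [TopologicalSpace X] {s : Set X}
    {f : ℝ → X} (hf : Continuous f) (hs : ∀ t, f t ∈ s) (a b : ℝ) :
    JoinedIn s (f a) (f b) :=
  ((joinedIn_univ.2 (PathConnectedSpace.joined a b)).map hf).mono
    (by rintro _ ⟨t, -, rfl⟩; exact hs t)

theorem JoinedIn.sign_eq {X : Type*} [TopologicalSpace X] {s : Set X} {f : X → ℝ}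
    (hf : Continuous f) (hs : ∀ x ∈ s, f x ≠ 0) {x y : X} (h : JoinedIn s x y) :
    Real.sign (f x) = Real.sign (f y) := by
  obtain ⟨γ, hγ⟩ := h
  have hvalue : ∀ a b, f (γ a) < 0 → 0 < f (γ b) → False := fun a b ha hb => by
    obtain ⟨t, ht⟩ := intermediate_value_univ a b (hf.comp γ.continuous) ⟨ha.le, hb.le⟩
    exact hs _ (hγ t) ht
  have hx := hs x (by simpa using hγ 0)
  have hy := hs y (by simpa using hγ 1)
  rcases hx.lt_or_gt with hx | hx <;> rcases hy.lt_or_gt with hy | hy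
  · rw [Real.sign_of_neg hx, Real.sign_of_neg hy]
  · exact (hvalue 0 1 (by simpa using hx) (by simpa using hy)).elim
  · exact (hvalue 1 0 (by simpa using hy) (by simpa using hx)).elim
  · rw [Real.sign_of_pos hx, Real.sign_of_pos hy]

theorem Polynomial.eq_X_of_eval_sq {K : Type*} [Field K] [CharZero K] {q : Polynomial K}
    (hsq : ∀ s, q.eval s ^ 2 = s ^ 2) (h₁ : q.eval 1 = 1) : q = Polynomial.X := by
  have : q ^ 2 = Polynomial.X ^ 2 := Polynomial.funext fun s => by simp [hsq]
  rcases sq_eq_sq_iff_eq_or_eq_neg.1 this with h | h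
  · exact h
  · rw [h] at h₁
    norm_num at h₁

theorem MvPolynomial.aeval_eval_eq_eval_aeval {σ R : Type*} [CommRing R] (p : MvPolynomial σ ℤ)
    (P : σ → Polynomial R) (s : R) :
    MvPolynomial.aeval (fun i => (P i).eval s) p = (MvPolynomial.aeval P p).eval s := by
  induction p using MvPolynomial.induction_on with
  | C a => simp
  | add p q hp hq => simp [hp, hq]
  | mul_X p i hp => simp [hp]

namespace Matrix

section IsCongruent

variable {m n R : Type*} [Fintype m] [Fintype n] [DecidableEq m] [DecidableEq n] [CommRing R]

def IsCongruent (X Y : Matrix n n R) : Prop :=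
  ∃ G : Matrix n n R, IsUnit G ∧ X = G * Y * Gᵀ

theorem IsCongruent.refl (X : Matrix n n R) : IsCongruent X X :=
  ⟨1, isUnit_one, by simp⟩

theorem IsCongruent.trans {X Y Z : Matrix n n R} (hXY : IsCongruent X Y)
    (hYZ : IsCongruent Y Z) : IsCongruent X Z := by
  obtain ⟨G, hG, rfl⟩ := hXY
  obtain ⟨H, hH, rfl⟩ := hYZ
  exact ⟨G * H, hG.mul hH, by simp only [transpose_mul, Matrix.mul_assoc]⟩

theorem IsCongruent.transpose_eq_neg {X Y : Matrix n n R} (h : IsCongruent X Y)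
    (hX : Xᵀ = -X) : Yᵀ = -Y := by
  obtain ⟨G, hG, rfl⟩ := h
  refine ((isUnit_transpose G).2 hG).mul_right_cancel (hG.mul_left_cancel ?_)
  simpa [transpose_mul, Matrix.mul_assoc] using hX

theorem IsCongruent.det_ne_zero {X Y : Matrix n n R} (h : IsCongruent X Y) (hX : X.det ≠ 0) :
    Y.det ≠ 0 := by
  obtain ⟨G, -, rfl⟩ := h
  intro hY
  simp [hY] at hX

theorem IsCongruent.submatrix {X Y : Matrix n n R} (h : IsCongruent X Y) (e : m ≃ n) :
    IsCongruent (X.submatrix e e) (Y.submatrix e e) := by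
  obtain ⟨G, hG, rfl⟩ := h
  refine ⟨G.submatrix e e, (hG.map (reindexAlgEquiv R R e.symm)), ?_⟩
  simp [transpose_submatrix, submatrix_mul_equiv]

theorem isCongruent_submatrix_perm (X : Matrix n n R) (σ : Equiv.Perm n) :
    IsCongruent (X.submatrix σ σ) X := by
  refine ⟨σ.toPEquiv.toMatrix, ?_, ?_⟩
  · rw [isUnit_iff_isUnit_det]
    simpa using (Equiv.Perm.sign σ).isUnit.map (Int.castRingHom R)
  · rw [PEquiv.toMatrix_toPEquiv_mul, ← PEquiv.toMatrix_symm, ← Equiv.toPEquiv_symm,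
      PEquiv.mul_toMatrix_toPEquiv]
    simp

theorem IsCongruent.fromBlocks {A A' : Matrix m m R} {D D' : Matrix n n R}
    (hA : IsCongruent A A') (hD : IsCongruent D D') :
    IsCongruent (fromBlocks A 0 0 D) (fromBlocks A' 0 0 D') := by
  obtain ⟨G, hG, rfl⟩ := hA
  obtain ⟨H, hH, rfl⟩ := hD
  refine ⟨Matrix.fromBlocks G 0 0 H, ?_, ?_⟩
  · rw [isUnit_iff_isUnit_det, det_fromBlocks_zero₂₁]
    exact ((isUnit_iff_isUnit_det _).1 hG).mul ((isUnit_iff_isUnit_det _).1 hH)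
  · simp [fromBlocks_transpose, fromBlocks_multiply]

theorem isCongruent_fromBlocks_of_transpose_eq_neg {A : Matrix m m R} [Invertible A]
    (hA : Aᵀ = -A) (B : Matrix m n R) (D : Matrix n n R) :
    IsCongruent (Matrix.fromBlocks A B (-Bᵀ) D)
      (Matrix.fromBlocks A 0 0 (D + Bᵀ * ⅟A * B)) := by
  have hAinv : (⅟A)ᵀ = -⅟A := calc
    (⅟A)ᵀ = ⅟A * (-(Aᵀ * (⅟A)ᵀ)) := by rw [hA, neg_mul, neg_neg, invOf_mul_cancel_left]
    _ = -⅟A := by rw [← transpose_mul, invOf_mul_self, transpose_one, mul_neg, mul_one]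
  refine ⟨Matrix.fromBlocks 1 0 (-Bᵀ * ⅟A) 1, ?_, ?_⟩
  · rw [isUnit_iff_isUnit_det, det_fromBlocks_zero₁₂]
    simp
  · rw [fromBlocks_eq_of_invertible₁₁, fromBlocks_transpose, transpose_mul, hAinv]
    simp [Matrix.mul_assoc]

end IsCongruent

section Skew

variable {n : Type*}

theorem apply_swap_of_transpose_eq_neg {X : Matrix n n ℝ} (hX : Xᵀ = -X) (i j : n) :
    X j i = -X i j :=
  congr_fun (congr_fun hX i) j

theorem apply_self_of_transpose_eq_neg {X : Matrix n n ℝ} (hX : Xᵀ = -X) (i : n) : X i i = 0 :=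
  self_eq_neg.1 (apply_swap_of_transpose_eq_neg hX i i)

theorem exists_isCongruent_apply_ne_zero [Fintype n] [DecidableEq n] {X : Matrix n n ℝ}
    (hX : Xᵀ = -X) (hdet : X.det ≠ 0) {p q : n} (hpq : p ≠ q) :
    ∃ Y, IsCongruent X Y ∧ Y p q ≠ 0 := by
  obtain ⟨j, hj⟩ : ∃ j, X p j ≠ 0 := by
    by_contra! h
    exact hdet (det_eq_zero_of_row_eq_zero p h)
  have hjp : p ≠ j := by
    rintro rfl
    exact hj (apply_self_of_transpose_eq_neg hX p)
  refine ⟨X.submatrix (Equiv.swap q j) (Equiv.swap q j), ?_, ?_⟩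
  · convert isCongruent_submatrix_perm _ (Equiv.swap q j) using 1
    ext a b
    simp
  · simpa [Equiv.swap_apply_of_ne_of_ne hpq hjp] using hj

end Skew

section GeneralLinear

variable {n : Type*} [DecidableEq n]

def coordReflection (i : n) : Matrix n n ℝ := diagonal (Function.update 1 i (-1))

theorem one_sub_two_smul_vecMulVec_single (i : n) :
    1 - (2 : ℝ) • vecMulVec (Pi.single i 1) (Pi.single i 1) = coordReflection i := by
  ext a b
  by_cases ha : a = i <;> by_cases hb : b = i <;>
    norm_num [coordReflection, vecMulVec_apply, one_apply, diagonal_apply, ha, hb, eq_comm (a := i)]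

variable [Fintype n]

theorem det_diagonal_update_one {R : Type*} [CommRing R] (i : n) (x : R) :
    (diagonal (Function.update 1 i x)).det = x := by
  simp [det_diagonal, Finset.prod_update_of_mem]

theorem coordReflection_mul_self (i : n) : coordReflection i * coordReflection i = 1 := by
  rw [coordReflection, diagonal_mul_diagonal, ← diagonal_one]
  congr 1
  ext k
  by_cases hk : k = i <;> simp [hk]

theorem isUnit_one_sub_two_smul_vecMulVec {R : Type*} [CommRing R] {v : n → R}
    (hv : v ⬝ᵥ v = 1) : IsUnit (1 - (2 : R) • vecMulVec v v) := by
  refine IsUnit.of_mul_eq_one (1 - (2 : R) • vecMulVec v v) ?_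
  simp only [sub_mul, mul_sub, one_mul, mul_one, smul_mul_smul_comm, vecMulVec_mul_vecMulVec, hv,
    one_smul]
  module

theorem joinedIn_coordReflection (i j : n) :
    JoinedIn {M | IsUnit M} (coordReflection i) (coordReflection j) := by
  rcases eq_or_ne i j with rfl | hij
  · exact .refl (IsUnit.of_mul_eq_one _ (coordReflection_mul_self i))
  let v (θ : ℝ) : n → ℝ := Real.cos θ • Pi.single i 1 + Real.sin θ • Pi.single j 1
  have hv : ∀ θ, v θ ⬝ᵥ v θ = 1 := fun θ => by simp [v, hij, hij.symm, ← sq]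
  have := joinedIn_of_continuous_of_forall_mem (s := {M : Matrix n n ℝ | IsUnit M})
    (f := fun θ => 1 - (2 : ℝ) • vecMulVec (v θ) (v θ)) (by fun_prop)
    (fun θ => isUnit_one_sub_two_smul_vecMulVec (hv θ)) 0 (Real.pi / 2)
  simpa [v, ← one_sub_two_smul_vecMulVec_single] using this

theorem joinedIn_diagonal_update_one_of_pos (i : n) {x : ℝ} (hx : 0 < x) :
    JoinedIn {M | IsUnit M} (diagonal (Function.update 1 i x)) 1 := by
  have := joinedIn_of_continuous_of_forall_mem (s := {M : Matrix n n ℝ | IsUnit M})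
    (f := fun y => diagonal (Function.update 1 i (Real.exp y))) (by fun_prop)
    (fun y => (isUnit_iff_isUnit_det _).2 (by
      rw [det_diagonal_update_one]; exact (Real.exp_pos y).ne'.isUnit))
    (Real.log x) 0
  simpa [Real.exp_log hx] using this

theorem joinedIn_one_or_coordReflection_mul {a : n} {A B : Matrix n n ℝ}
    (hA : JoinedIn {M | IsUnit M} A 1 ∨ JoinedIn {M | IsUnit M} A (coordReflection a))
    (hB : JoinedIn {M | IsUnit M} B 1 ∨ JoinedIn {M | IsUnit M} B (coordReflection a)) :
    JoinedIn {M | IsUnit M} (A * B) 1 ∨ JoinedIn {M | IsUnit M} (A * B) (coordReflection a) := by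
  rcases hA with hA | hA <;> rcases hB with hB | hB
  · exact .inl (by simpa using hA.mul_isUnit hB)
  · exact .inr (by simpa using hA.mul_isUnit hB)
  · exact .inr (by simpa using hA.mul_isUnit hB)
  · exact .inl (by simpa [coordReflection_mul_self] using hA.mul_isUnit hB)

theorem joinedIn_one_or_coordReflection_of_diagonal_update (a i : n) {x : ℝ} (hx : x ≠ 0) :
    JoinedIn {M | IsUnit M} (diagonal (Function.update 1 i x)) 1 ∨
      JoinedIn {M | IsUnit M} (diagonal (Function.update 1 i x)) (coordReflection a) := by
  rcases hx.lt_or_gt with hneg | hpos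
  · have hsplit : diagonal (Function.update 1 i x) =
        coordReflection i * diagonal (Function.update 1 i (-x)) := by
      rw [coordReflection, diagonal_mul_diagonal]
      congr 1
      ext k
      by_cases hk : k = i <;> simp [hk]
    right
    simpa [hsplit] using (joinedIn_coordReflection i a).mul_isUnit
      (joinedIn_diagonal_update_one_of_pos i (neg_pos.2 hneg))
  · exact .inl (joinedIn_diagonal_update_one_of_pos i hpos)

theorem joinedIn_one_or_coordReflection_of_diagonal (a : n) {d : n → ℝ}
    (hd : ∀ i, d i ≠ 0) :
    JoinedIn {M | IsUnit M} (diagonal d) 1 ∨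
      JoinedIn {M | IsUnit M} (diagonal d) (coordReflection a) := by
  suffices ∀ s : Finset n,
      JoinedIn {M | IsUnit M} (diagonal fun i => if i ∈ s then d i else 1) 1 ∨
        JoinedIn {M | IsUnit M} (diagonal fun i => if i ∈ s then d i else 1)
          (coordReflection a) by
    simpa using this Finset.univ
  intro s
  induction s using Finset.induction_on with
  | empty =>
    exact .inl (by simpa using JoinedIn.refl (F := {M : Matrix n n ℝ | IsUnit M}) isUnit_one)
  | insert c s hc ih =>
    have hsplit : (diagonal fun i => if i ∈ insert c s then d i else 1) =
        diagonal (Function.update 1 c (d c)) * diagonal fun i => if i ∈ s then d i else 1 := by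
      rw [diagonal_mul_diagonal]
      congr 1
      ext k
      by_cases hk : k = c <;> simp [hk, hc]
    rw [hsplit]
    exact joinedIn_one_or_coordReflection_mul
      (joinedIn_one_or_coordReflection_of_diagonal_update a c (hd c)) ih

theorem joinedIn_transvection_one {i j : n} (hij : i ≠ j) (c : ℝ) :
    JoinedIn {M | IsUnit M} (transvection i j c) 1 := by
  have := joinedIn_of_continuous_of_forall_mem (s := {M : Matrix n n ℝ | IsUnit M})
    (f := fun x => 1 + x • single i j 1) (by fun_prop)
    (fun x => (isUnit_iff_isUnit_det _).2 (by
      rw [smul_single, smul_eq_mul, mul_one, ← transvection, det_transvection_of_ne _ _ hij]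
      exact isUnit_one)) c 0
  simpa [transvection, smul_single] using this

theorem joinedIn_one_or_coordReflection (a : n) {A : Matrix n n ℝ} (hA : A.det ≠ 0) :
    JoinedIn {M | IsUnit M} A 1 ∨ JoinedIn {M | IsUnit M} A (coordReflection a) := by
  refine diagonal_transvection_induction_of_det_ne_zero
    (fun N => JoinedIn {M | IsUnit M} N 1 ∨ JoinedIn {M | IsUnit M} N (coordReflection a)) A hA
    (fun d hd => joinedIn_one_or_coordReflection_of_diagonal a fun i hi => hd ?_)
    (fun t => .inl (joinedIn_transvection_one t.hij t.c))
    (fun A B _ _ hA hB => joinedIn_one_or_coordReflection_mul hA hB)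
  simp [det_diagonal, Finset.prod_eq_zero (Finset.mem_univ i) hi]

end GeneralLinear

end Matrix

def J₂ : Matrix (Fin 2) (Fin 2) ℝ := !![0, 1; -1, 0]

theorem isCongruent_J₂ {A : Matrix (Fin 2) (Fin 2) ℝ} (hA : Aᵀ = -A) (h01 : A 0 1 ≠ 0) :
    IsCongruent A J₂ := by
  refine ⟨diagonal ![A 0 1, 1], ?_, ?_⟩
  · simpa [isUnit_iff_isUnit_det] using h01
  · ext i j
    fin_cases i <;> fin_cases j <;>
      simp [J₂, apply_self_of_transpose_eq_neg hA, apply_swap_of_transpose_eq_neg hA 0 1]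

theorem exists_isCongruent_fromBlocks_J₂ {n : Type*} [Fintype n] [DecidableEq n]
    {X : Matrix (Fin 2 ⊕ n) (Fin 2 ⊕ n) ℝ} (hX : Xᵀ = -X) (hdet : X.det ≠ 0) :
    ∃ S : Matrix n n ℝ, IsCongruent X (fromBlocks J₂ 0 0 S) := by
  obtain ⟨Y, hXY, hY⟩ := exists_isCongruent_apply_ne_zero hX hdet (p := .inl 0) (q := .inl 1)
    (by simp)
  have hYskew := hXY.transpose_eq_neg hX
  have hA : Y.toBlocks₁₁ᵀ = -Y.toBlocks₁₁ := by
    ext i j; exact apply_swap_of_transpose_eq_neg hYskew _ _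
  have hC : -Y.toBlocks₁₂ᵀ = Y.toBlocks₂₁ := by
    ext i j; exact (apply_swap_of_transpose_eq_neg hYskew _ _).symm
  have hAdet : IsUnit Y.toBlocks₁₁.det := by
    rw [det_fin_two, apply_self_of_transpose_eq_neg hA, apply_self_of_transpose_eq_neg hA,
      apply_swap_of_transpose_eq_neg hA 0 1]
    simpa [toBlocks₁₁] using hY
  let _ := invertibleOfIsUnitDet _ hAdet
  have hschur := isCongruent_fromBlocks_of_transpose_eq_neg hA Y.toBlocks₁₂ Y.toBlocks₂₂
  rw [hC, fromBlocks_toBlocks] at hschur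
  exact ⟨_, hXY.trans (hschur.trans ((isCongruent_J₂ hA hY).fromBlocks (.refl _)))⟩

def finTwoSumEquiv (m : ℕ) : Fin 2 ⊕ Fin (2 * m) ≃ Fin (2 * (m + 1)) :=
  finSumFinEquiv.trans (finCongr (by ring))

theorem Jpos_submatrix_finTwoSumEquiv (m : ℕ) :
    (Jpos (m + 1)).submatrix (finTwoSumEquiv m) (finTwoSumEquiv m) =
      fromBlocks J₂ 0 0 (Jpos m) := by
  ext (i | i) (j | j)
  · fin_cases i <;> fin_cases j <;> simp [Jpos, J₂, finTwoSumEquiv]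
  all_goals simp [Jpos, finTwoSumEquiv]
  all_goals split_ifs <;> first | rfl | omega

theorem Jpos_transpose (m : ℕ) : (Jpos m)ᵀ = -Jpos m := by
  ext i j
  simp only [Jpos, transpose_apply, of_apply, Matrix.neg_apply]
  split_ifs <;> first | omega | norm_num

theorem det_Jpos (m : ℕ) : (Jpos m).det = 1 := by
  induction m with
  | zero => exact det_fin_zero
  | succ m ih =>
    rw [← det_submatrix_equiv_self (finTwoSumEquiv m), Jpos_submatrix_finTwoSumEquiv,
      det_fromBlocks_zero₂₁, ih]
    simp [J₂]

theorem isCongruent_Jpos {m : ℕ} {X : Matrix (Fin (2 * m)) (Fin (2 * m)) ℝ} (hX : Xᵀ = -X)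
    (hdet : X.det ≠ 0) : IsCongruent X (Jpos m) := by
  induction m with
  | zero => exact ⟨1, isUnit_one, by ext i; exact (Nat.not_lt_zero _ i.2).elim⟩
  | succ m ih =>
    let e := finTwoSumEquiv m
    have hXe : (X.submatrix e e)ᵀ = -X.submatrix e e := by rw [transpose_submatrix, hX]; rfl
    have hXe' : (X.submatrix e e).det ≠ 0 := by rwa [det_submatrix_equiv_self]
    obtain ⟨S, hS⟩ := exists_isCongruent_fromBlocks_J₂ hXe hXe'
    have hSskew : Sᵀ = -S := by
      simpa [fromBlocks_transpose, fromBlocks_neg] using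
        congrArg toBlocks₂₂ (hS.transpose_eq_neg hXe)
    have hSdet : S.det ≠ 0 := by
      simpa [det_fromBlocks_zero₂₁, J₂] using hS.det_ne_zero hXe'
    have := (hS.trans ((IsCongruent.refl J₂).fromBlocks (ih hSskew hSdet))).submatrix e.symm
    rw [← Jpos_submatrix_finTwoSumEquiv] at this
    simpa [e] using this

theorem Jneg_eq (n : ℕ) (hn : 0 < n) :
    Jneg n =
      coordReflection ⟨0, by omega⟩ * Jpos n * (coordReflection ⟨0, by omega⟩)ᵀ := by
  ext a b
  simp only [coordReflection, diagonal_transpose, mul_diagonal, diagonal_mul,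
    Function.update_apply, Jneg, Jpos, of_apply, Fin.ext_iff, Pi.one_apply]
  split_ifs <;> first | omega | norm_num

def invertibleSkew (ι : Type*) [Fintype ι] [DecidableEq ι] : Set (Matrix ι ι ℝ) :=
  {X | Xᵀ = -X ∧ X.det ≠ 0}

theorem mul_mul_transpose_mem_invertibleSkew {ι : Type*} [Fintype ι] [DecidableEq ι]
    {G X : Matrix ι ι ℝ} (hG : IsUnit G) (hX : X ∈ invertibleSkew ι) :
    G * X * Gᵀ ∈ invertibleSkew ι := by
  refine ⟨by simp [transpose_mul, hX.1, Matrix.mul_assoc], ?_⟩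
  have hG' : G.det ≠ 0 := ((isUnit_iff_isUnit_det _).1 hG).ne_zero
  simpa [det_mul, hG'] using hX.2

theorem Jpos_mem_invertibleSkew (n : ℕ) : Jpos n ∈ invertibleSkew (Fin (2 * n)) :=
  ⟨Jpos_transpose n, by simp [det_Jpos]⟩

theorem Jneg_mem_invertibleSkew {n : ℕ} (hn : 0 < n) :
    Jneg n ∈ invertibleSkew (Fin (2 * n)) := by
  rw [Jneg_eq n hn]
  exact mul_mul_transpose_mem_invertibleSkew (.of_mul_eq_one _ (coordReflection_mul_self _))
    (Jpos_mem_invertibleSkew n)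

theorem joinedIn_Jpos_or_Jneg {n : ℕ} (hn : 0 < n) {X : Matrix (Fin (2 * n)) (Fin (2 * n)) ℝ}
    (hX : X ∈ invertibleSkew (Fin (2 * n))) :
    JoinedIn (invertibleSkew _) X (Jpos n) ∨ JoinedIn (invertibleSkew _) X (Jneg n) := by
  obtain ⟨G, hG, rfl⟩ := isCongruent_Jpos hX.1 hX.2
  have hmaps : Set.MapsTo (fun M => M * Jpos n * Mᵀ) {M | IsUnit M} (invertibleSkew _) :=
    fun M hM => mul_mul_transpose_mem_invertibleSkew hM (Jpos_mem_invertibleSkew n)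
  have hf : Continuous fun M : Matrix (Fin (2 * n)) (Fin (2 * n)) ℝ => M * Jpos n * Mᵀ := by
    fun_prop
  rcases joinedIn_one_or_coordReflection ⟨0, by omega⟩
    ((isUnit_iff_isUnit_det _).1 hG).ne_zero with h | h
  · exact .inl (by simpa using (h.map hf).mono hmaps.image_subset)
  · exact .inr (by simpa [Jneg_eq n hn] using (h.map hf).mono hmaps.image_subset)

namespace IsPfaffian

variable {n : ℕ} {Pf : Matrix (Fin (2 * n)) (Fin (2 * n)) ℝ → ℝ}

theorem continuous (hPf : IsPfaffian n Pf) : Continuous Pf := by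
  obtain ⟨⟨p, hp⟩, -, -⟩ := hPf
  have : Pf = fun X => MvPolynomial.eval (fun ij => X ij.1 ij.2)
      (MvPolynomial.map (algebraMap ℤ ℝ) p) :=
    funext fun X => by rw [hp, MvPolynomial.aeval_def, MvPolynomial.eval_map]
  rw [this]
  exact (MvPolynomial.continuous_eval _).comp (by fun_prop)

theorem apply_ne_zero (hPf : IsPfaffian n Pf) {X : Matrix (Fin (2 * n)) (Fin (2 * n)) ℝ}
    (hX : X ∈ invertibleSkew _) : Pf X ≠ 0 := by
  intro h
  apply hX.2
  rw [← hPf.2.1 X hX.1, h, zero_pow two_ne_zero]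

theorem sign_eq_of_joinedIn (hPf : IsPfaffian n Pf)
    {X Y : Matrix (Fin (2 * n)) (Fin (2 * n)) ℝ} (h : JoinedIn (invertibleSkew _) X Y) :
    Real.sign (Pf X) = Real.sign (Pf Y) :=
  h.sign_eq hPf.continuous fun _ => hPf.apply_ne_zero

theorem exists_apply_map_eval_eq_eval (hPf : IsPfaffian n Pf)
    (P : Matrix (Fin (2 * n)) (Fin (2 * n)) (Polynomial ℝ)) :
    ∃ q : Polynomial ℝ, ∀ s, Pf (P.map (Polynomial.eval s)) = q.eval s := by
  obtain ⟨⟨p, hp⟩, -, -⟩ := hPf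
  refine ⟨MvPolynomial.aeval (fun ij => P ij.1 ij.2) p, fun s => ?_⟩
  rw [hp, ← MvPolynomial.aeval_eval_eq_eval_aeval]
  rfl

theorem apply_diagonal_update_mul_Jpos_mul_transpose (hPf : IsPfaffian n Pf) (i : Fin (2 * n))
    (s : ℝ) :
    Pf (diagonal (Function.update 1 i s) * Jpos n * (diagonal (Function.update 1 i s))ᵀ) = s := by
  obtain ⟨q, hq⟩ := hPf.exists_apply_map_eval_eq_eval
    (diagonal (Function.update 1 i Polynomial.X) * (Jpos n).map Polynomial.C *
      (diagonal (Function.update 1 i Polynomial.X))ᵀ)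
  have hcurve : ∀ s : ℝ, Pf (diagonal (Function.update 1 i s) * Jpos n *
      (diagonal (Function.update 1 i s))ᵀ) = q.eval s := fun s => by
    rw [← hq, ← Polynomial.coe_evalRingHom, Matrix.map_mul, Matrix.map_mul]
    have hupdate : (fun k => (Function.update (1 : Fin (2 * n) → Polynomial ℝ) i
        Polynomial.X k).eval s) = Function.update (1 : Fin (2 * n) → ℝ) i s := by
      ext k
      by_cases hk : k = i <;> simp [hk]
    simp [diagonal_map, hupdate, Function.comp_def]
  have hX : q = Polynomial.X := by
    refine Polynomial.eq_X_of_eval_sq (fun s => ?_) ?_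
    · rw [← hcurve, hPf.2.1 _ (by simp [transpose_mul, Jpos_transpose, Matrix.mul_assoc]),
        det_mul, det_mul, det_transpose, det_diagonal_update_one, det_Jpos]
      ring
    · simpa [hPf.2.2] using (hcurve 1).symm
  rw [hcurve, hX, Polynomial.eval_X]

theorem apply_Jneg (hPf : IsPfaffian n Pf) (hn : 0 < n) : Pf (Jneg n) = -1 := by
  rw [Jneg_eq n hn, coordReflection, hPf.apply_diagonal_update_mul_Jpos_mul_transpose]

end IsPfaffian

/-- The set of invertible real skew-symmetric 2n×2n matrices has exactly two
path-components, distinguished by the sign of the Pfaffian. -/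
theorem skew_invertible_two_components (n : ℕ) (hn : 0 < n)
    (Pf : Matrix (Fin (2*n)) (Fin (2*n)) ℝ → ℝ) (hPf : IsPfaffian n Pf) :
    (Jpos n) ∈ {X : Matrix (Fin (2*n)) (Fin (2*n)) ℝ | Xᵀ = -X ∧ X.det ≠ 0} ∧
    (Jneg n) ∈ {X : Matrix (Fin (2*n)) (Fin (2*n)) ℝ | Xᵀ = -X ∧ X.det ≠ 0} ∧
    ¬ JoinedIn {X : Matrix (Fin (2*n)) (Fin (2*n)) ℝ | Xᵀ = -X ∧ X.det ≠ 0}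
        (Jpos n) (Jneg n) ∧
    ∀ X ∈ {X : Matrix (Fin (2*n)) (Fin (2*n)) ℝ | Xᵀ = -X ∧ X.det ≠ 0},
      ∀ Y ∈ {X : Matrix (Fin (2*n)) (Fin (2*n)) ℝ | Xᵀ = -X ∧ X.det ≠ 0},
        (JoinedIn {X : Matrix (Fin (2*n)) (Fin (2*n)) ℝ | Xᵀ = -X ∧ X.det ≠ 0} X Y ↔
          Real.sign (Pf X) = Real.sign (Pf Y)) := by
  have hpos : Real.sign (Pf (Jpos n)) = 1 := by rw [hPf.2.2, Real.sign_one]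
  have hneg : Real.sign (Pf (Jneg n)) = -1 := by
    rw [hPf.apply_Jneg hn, Real.sign_neg, Real.sign_one]
  have hsign : ∀ {X Y}, JoinedIn (invertibleSkew _) X Y → Real.sign (Pf X) = Real.sign (Pf Y) :=
    hPf.sign_eq_of_joinedIn
  refine ⟨Jpos_mem_invertibleSkew n, Jneg_mem_invertibleSkew hn,
    fun h => by norm_num [hsign h, hneg] at hpos, fun X hX Y hY => ⟨hsign, fun hXY => ?_⟩⟩
  rcases joinedIn_Jpos_or_Jneg hn hX with hX' | hX' <;>
    rcases joinedIn_Jpos_or_Jneg hn hY with hY' | hY'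
  · exact hX'.trans hY'.symm
  · norm_num [hsign hX', hsign hY', hpos, hneg] at hXY
  · norm_num [hsign hX', hsign hY', hpos, hneg] at hXY
  · exact hX'.trans hY'.symm
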